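/- arXiv:2310.19030 — 5 statements merged into one kernel-verified Lean document; each statement's English description precedes it below -/
import Mathlib

section
/- Let T be a locally finite rooted tree and fix a height h ≥ 1. For every vertex v at height |v| < h, let z_v(h) denote the number of vertices of T at height h that are descendants of v, and let z(h) denote the number of vertices at height h (descendants of the root). For a vertex v with children v1, ..., vd(v), define φ(v,h) = 2 · Σ_{1 ≤ i < j ≤ d(v)} z_{vi}(h) · z_{vj}(h). Then z(h)(z(h)−1) = Σ_{v : |v| < h} φ(v,h). -/
open Finset

/-- The number of vertices of the tree `T` at height `h` that are descendants of `v`. -/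
def treeCount (T : Finset (List ℕ)) (h : ℕ) (v : List ℕ) : ℕ :=
  (T.filter (fun w => w.length = h ∧ v <+: w)).card

/-- The children of `v` in the tree `T`: the vertices extending `v` by one letter. -/
def treeChildren (T : Finset (List ℕ)) (v : List ℕ) : Finset (List ℕ) :=
  T.filter (fun w => w.length = v.length + 1 ∧ v <+: w)

/-- `φ(v,h) = 2 Σ_{1 ≤ i < j ≤ d(v)} z_{vi}(h) z_{vj}(h)`, written as the sum over
ordered pairs of distinct children. -/
def treePhi (T : Finset (List ℕ)) (h : ℕ) (v : List ℕ) : ℕ :=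
  ∑ p ∈ (treeChildren T v).offDiag, treeCount T h p.1 * treeCount T h p.2

/-!
Count ordered pairs `(a, b)` of distinct vertices at height `h` according to their most recent
common ancestor, the longest common prefix `v` of `a` and `b`. Writing `a = v ++ x :: s` and
`b = v ++ y :: t` with `x ≠ y`, the pair passes through the distinct children `v ++ [x]` and
`v ++ [y]` of `v`; conversely descendants of two distinct children of `v` have common prefix
exactly `v`. So the pairs with ancestor `v` number `φ(v,h)`, and `v` has height `< h`.
-/

namespace List

variable {α : Type*} [DecidableEq α]

def commonPrefix : List α → List α → List α
  | x :: xs, y :: ys => if x = y then x :: commonPrefix xs ys else []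
  | _, _ => []

theorem commonPrefix_append_cons (v : List α) {x y : α} (hxy : x ≠ y) (s t : List α) :
    commonPrefix (v ++ x :: s) (v ++ y :: t) = v := by
  induction v with
  | nil => simp [commonPrefix, hxy]
  | cons a v ih => simp [commonPrefix, ih]

theorem exists_eq_commonPrefix_append_cons :
    ∀ {a b : List α}, a.length = b.length → a ≠ b →
      ∃ x y s t, x ≠ y ∧ a = commonPrefix a b ++ x :: s ∧ b = commonPrefix a b ++ y :: t
  | [], [], _, hab => absurd rfl hab
  | x :: a, y :: b, hlen, hab => by
    by_cases hxy : x = y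
    · subst hxy
      obtain ⟨x', y', s, t, hne, ha, hb⟩ :=
        exists_eq_commonPrefix_append_cons (by simpa using hlen) (by simpa using hab)
      exact ⟨x', y', s, t, hne, by simp [commonPrefix, ← ha], by simp [commonPrefix, ← hb]⟩
    · exact ⟨x, y, a, b, hxy, by simp [commonPrefix, hxy], by simp [commonPrefix, hxy]⟩

end List

section Tree

variable {T : Finset (List ℕ)} {h : ℕ}

def treeDescendants (T : Finset (List ℕ)) (h : ℕ) (v : List ℕ) : Finset (List ℕ) :=
  T.filter (fun w => w.length = h ∧ v <+: w)

theorem card_treeDescendants (v : List ℕ) : #(treeDescendants T h v) = treeCount T h v := rfl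

theorem mem_treeChildren_iff {v c : List ℕ} : c ∈ treeChildren T v ↔ c ∈ T ∧ ∃ x, c = v ++ [x] := by
  simp only [treeChildren, Finset.mem_filter]
  constructor
  · rintro ⟨hc, hlen, s, rfl⟩
    obtain ⟨x, rfl⟩ := List.length_eq_one_iff.mp (by simpa using hlen)
    exact ⟨hc, x, rfl⟩
  · rintro ⟨hc, x, rfl⟩
    exact ⟨hc, by simp, List.prefix_append _ _⟩

theorem commonPrefix_mem_of_mem_offDiag {p : List ℕ × List ℕ}
    (hprefix : ∀ v w : List ℕ, w ∈ T → v <+: w → v ∈ T)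
    (hp : p ∈ (treeDescendants T h []).offDiag) :
    p.1.commonPrefix p.2 ∈ T.filter (fun v => v.length < h) := by
  simp only [treeDescendants, mem_offDiag, mem_filter, List.nil_prefix, and_true] at hp
  obtain ⟨⟨ha, rfl⟩, ⟨-, hlen⟩, hne⟩ := hp
  obtain ⟨x, y, s, t, -, hs, -⟩ := List.exists_eq_commonPrefix_append_cons hlen.symm hne
  refine mem_filter.mpr ⟨hprefix _ _ ha ⟨x :: s, hs.symm⟩, ?_⟩
  have := congrArg List.length hs
  simp only [List.length_append, List.length_cons] at this
  omega

theorem eq_of_mem_treeChildren_of_prefix {v c d w : List ℕ} (hc : c ∈ treeChildren T v)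
    (hd : d ∈ treeChildren T v) (hcw : c <+: w) (hdw : d <+: w) : c = d := by
  simp only [treeChildren, Finset.mem_filter] at hc hd
  exact (List.prefix_of_prefix_length_le hcw hdw (by omega)).eq_of_length (by omega)

theorem filter_commonPrefix_eq_biUnion (hprefix : ∀ v w : List ℕ, w ∈ T → v <+: w → v ∈ T)
    (v : List ℕ) :
    (treeDescendants T h []).offDiag.filter (fun p => p.1.commonPrefix p.2 = v)
      = (treeChildren T v).offDiag.biUnion
          (fun c => treeDescendants T h c.1 ×ˢ treeDescendants T h c.2) := by
  ext ⟨a, b⟩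
  simp only [treeDescendants, mem_filter, mem_offDiag, mem_biUnion, mem_product,
    List.nil_prefix, and_true, Prod.exists, mem_treeChildren_iff]
  constructor
  · rintro ⟨⟨⟨ha, hla⟩, ⟨hb, hlb⟩, hne⟩, rfl⟩
    obtain ⟨x, y, s, t, hxy, hs, ht⟩ :=
      List.exists_eq_commonPrefix_append_cons (hla.trans hlb.symm) hne
    have has : a.commonPrefix b ++ [x] <+: a := ⟨s, by simp [← hs]⟩
    have hbt : a.commonPrefix b ++ [y] <+: b := ⟨t, by simp [← ht]⟩
    exact ⟨_, _, ⟨⟨hprefix _ _ ha has, x, rfl⟩, ⟨hprefix _ _ hb hbt, y, rfl⟩, by simp [hxy]⟩,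
      ⟨ha, hla, has⟩, hb, hlb, hbt⟩
  · rintro ⟨_, _, ⟨⟨-, x, rfl⟩, ⟨-, y, rfl⟩, hxy⟩, ⟨ha, hla, s, rfl⟩, hb, hlb, t, rfl⟩
    replace hxy : x ≠ y := by simpa using hxy
    simp only [List.append_assoc, List.singleton_append] at *
    exact ⟨⟨⟨ha, hla⟩, ⟨hb, hlb⟩, by simp [hxy]⟩, List.commonPrefix_append_cons v hxy s t⟩

theorem card_filter_commonPrefix_eq (hprefix : ∀ v w : List ℕ, w ∈ T → v <+: w → v ∈ T)
    (v : List ℕ) :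
    #((treeDescendants T h []).offDiag.filter (fun p => p.1.commonPrefix p.2 = v))
      = treePhi T h v := by
  rw [filter_commonPrefix_eq_biUnion hprefix, card_biUnion, treePhi]
  · exact sum_congr rfl fun c _ => card_product _ _
  · rintro ⟨c₁, c₂⟩ hc ⟨d₁, d₂⟩ hd hne
    simp only [coe_offDiag, Set.mem_offDiag, mem_coe] at hc hd
    refine disjoint_left.mpr fun ⟨a, b⟩ hc' hd' => hne ?_
    simp only [treeDescendants, mem_product, mem_filter] at hc' hd'
    rw [eq_of_mem_treeChildren_of_prefix hc.1 hd.1 hc'.1.2.2 hd'.1.2.2,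
      eq_of_mem_treeChildren_of_prefix hc.2.1 hd.2.1 hc'.2.2.2 hd'.2.2.2]

end Tree

theorem stmt_0_general (T : Finset (List ℕ)) (h : ℕ)
    (hprefix : ∀ v w : List ℕ, w ∈ T → v <+: w → v ∈ T) :
    treeCount T h [] * (treeCount T h [] - 1)
      = ∑ v ∈ T.filter (fun v => v.length < h), treePhi T h v := by
  calc treeCount T h [] * (treeCount T h [] - 1) = #(treeDescendants T h []).offDiag := by
        rw [offDiag_card, Nat.mul_sub_one, card_treeDescendants]
    _ = ∑ v ∈ T.filter (fun v => v.length < h),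
          #((treeDescendants T h []).offDiag.filter (fun p => p.1.commonPrefix p.2 = v)) :=
        card_eq_sum_card_fiberwise fun _ hp => commonPrefix_mem_of_mem_offDiag hprefix hp
    _ = ∑ v ∈ T.filter (fun v => v.length < h), treePhi T h v :=
        sum_congr rfl fun v _ => card_filter_commonPrefix_eq hprefix v

theorem stmt_0 (T : Finset (List ℕ)) (h : ℕ) (hh : 1 ≤ h)
    (hroot : ([] : List ℕ) ∈ T)
    (hprefix : ∀ v w : List ℕ, w ∈ T → v <+: w → v ∈ T) :
    treeCount T h [] * (treeCount T h [] - 1)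
      = ∑ v ∈ T.filter (fun v => v.length < h), treePhi T h v :=
  stmt_0_general T h hprefix
end

section
/- Let (ξ_n)_{n≥1} be a sequence of nonnegative real-valued random variables and ξ a nonnegative random variable, all integrable. If lim_{n→∞} E(ξ_n) = E(ξ) and liminf_{n→∞} ξ_n ≥ ξ almost surely, then ξ_n converges to ξ in L¹. -/
open MeasureTheory Filter

/-- A variant of Scheffé's lemma: if nonnegative integrable random variables `ξ n` satisfy
`E(ξ n) → E(ξ)` and `liminf ξ n ≥ ξ` a.s., then `ξ n → ξ` in `L¹`. -/
theorem stmt_1 {Ω : Type*} [MeasurableSpace Ω] (μ : Measure Ω) [IsProbabilityMeasure μ]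
    (ξ : Ω → ℝ) (ξn : ℕ → Ω → ℝ)
    (hξnonneg : 0 ≤ᵐ[μ] ξ) (hξnnonneg : ∀ n, 0 ≤ᵐ[μ] ξn n)
    (hξint : Integrable ξ μ) (hξnint : ∀ n, Integrable (ξn n) μ)
    (hmean : Tendsto (fun n => ∫ ω, ξn n ω ∂μ) atTop (nhds (∫ ω, ξ ω ∂μ)))
    (hliminf : ∀ᵐ ω ∂μ, ξ ω ≤ liminf (fun n => ξn n ω) atTop) :
    Tendsto (fun n => ∫ ω, |ξn n ω - ξ ω| ∂μ) atTop (nhds 0) := by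
  set g : ℕ → Ω → ℝ := fun n ω => max (ξ ω - ξn n ω) 0 with hg
  have hgint : ∀ n, Integrable (g n) μ := fun n => (hξint.sub (hξnint n)).pos_part
  -- a.e. pointwise convergence of g to 0
  have hae : ∀ᵐ ω ∂μ, Tendsto (fun n => g n ω) atTop (nhds 0) := by
    filter_upwards [hliminf, ae_all_iff.2 hξnnonneg] with ω hω hnn
    rw [NormedAddCommGroup.tendsto_nhds_zero]
    intro ε hε
    have hb : IsBoundedUnder (· ≥ ·) atTop (fun n => ξn n ω) :=
      ⟨0, eventually_map.2 (Eventually.of_forall hnn)⟩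
    have hlt : (ξ ω - ε : ℝ) < liminf (fun n => ξn n ω) atTop :=
      lt_of_lt_of_le (by linarith) hω
    filter_upwards [eventually_lt_of_lt_liminf hlt hb] with n hn
    rw [Real.norm_eq_abs, abs_of_nonneg (le_max_right _ _)]
    exact max_lt (by linarith) hε
  -- domination
  have hbound : ∀ n, ∀ᵐ ω ∂μ, ‖g n ω‖ ≤ ξ ω := by
    intro n
    filter_upwards [hξnonneg, hξnnonneg n] with ω h1 h2
    simp only [Pi.zero_apply] at h1 h2
    rw [Real.norm_eq_abs, abs_of_nonneg (le_max_right _ _)]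
    exact max_le (by linarith) h1
  have hglim : Tendsto (fun n => ∫ ω, g n ω ∂μ) atTop (nhds 0) := by
    have := tendsto_integral_of_dominated_convergence ξ
      (fun n => (hgint n).aestronglyMeasurable) hξint hbound hae
    simpa using this
  have key : ∀ n, ∫ ω, |ξn n ω - ξ ω| ∂μ =
      ((∫ ω, ξn n ω ∂μ) - (∫ ω, ξ ω ∂μ)) + 2 * ∫ ω, g n ω ∂μ := by
    intro n
    have heq : (fun ω => |ξn n ω - ξ ω|) = fun ω => (ξn n ω - ξ ω) + 2 * g n ω := by
      funext ω
      simp only [hg]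
      rcases le_total (ξn n ω) (ξ ω) with h | h
      · rw [abs_of_nonpos (by linarith), max_eq_left (by linarith)]; ring
      · rw [abs_of_nonneg (by linarith), max_eq_right (by linarith)]; ring
    have hsub : Integrable (fun ω => ξn n ω - ξ ω) μ := (hξnint n).sub hξint
    have hcm : Integrable (fun ω => 2 * g n ω) μ := (hgint n).const_mul 2
    rw [heq, integral_add hsub hcm, integral_sub (hξnint n) hξint, MeasureTheory.integral_const_mul]
  have final : Tendsto (fun n => ((∫ ω, ξn n ω ∂μ) - (∫ ω, ξ ω ∂μ)) + 2 * ∫ ω, g n ω ∂μ)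
      atTop (nhds 0) := by
    have h1 : Tendsto (fun n => (∫ ω, ξn n ω ∂μ) - (∫ ω, ξ ω ∂μ)) atTop (nhds 0) := by
      simpa using hmean.sub (tendsto_const_nhds (x := ∫ ω, ξ ω ∂μ))
    have h2 := hglim.const_mul (2 : ℝ)
    simpa using h1.add h2
  exact final.congr fun n => (key n).symm
end

section
/- With k*, ν, q, C as above and f(x) = Σ_{j=1}^{k*} (1−q)·j·ν(j)/(x − q·j) defined for x/q ∉ C: the equation f(x) = 1 has exactly #C solutions among x with x/q ∉ C, all of which are positive. Specifically, there is exactly one solution in each open interval (q·i, q·i') for consecutive elements i < i' of C, exactly one solution in (q·max C, ∞), and no solutions in (−∞, q·min C) ∪ (negative reals). -/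
open Finset Filter Set



lemma aux_div_le (c a x y : ℝ) (hc : 0 ≤ c) (hxy : x < y) (h : a < x ∨ y < a) :
    c / (y - a) ≤ c / (x - a) := by
  have hprod : 0 < (x - a) * (y - a) := by
    rcases h with h | h
    · apply mul_pos <;> linarith
    · apply mul_pos_of_neg_of_neg <;> linarith
  have hx : x - a ≠ 0 := by rintro h0; rw [h0] at hprod; simp at hprod
  have hy : y - a ≠ 0 := by rintro h0; rw [h0] at hprod; simp at hprod
  have key : c / (x - a) - c / (y - a) = c * (y - x) / ((x - a) * (y - a)) := by
    field_simp; ring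
  have : 0 ≤ c * (y - x) / ((x - a) * (y - a)) :=
    div_nonneg (mul_nonneg hc (by linarith)) hprod.le
  linarith

lemma aux_div_lt (c a x y : ℝ) (hc : 0 < c) (hxy : x < y) (h : a < x ∨ y < a) :
    c / (y - a) < c / (x - a) := by
  have hprod : 0 < (x - a) * (y - a) := by
    rcases h with h | h
    · apply mul_pos <;> linarith
    · apply mul_pos_of_neg_of_neg <;> linarith
  have hx : x - a ≠ 0 := by rintro h0; rw [h0] at hprod; simp at hprod
  have hy : y - a ≠ 0 := by rintro h0; rw [h0] at hprod; simp at hprod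
  have key : c / (x - a) - c / (y - a) = c * (y - x) / ((x - a) * (y - a)) := by
    field_simp; ring
  have : 0 < c * (y - x) / ((x - a) * (y - a)) :=
    div_pos (mul_pos hc (by linarith)) hprod
  linarith

-- tendsto c/(x-a) → atTop as x → a+
lemma aux_tendsto_right (c a : ℝ) (hc : 0 < c) :
    Tendsto (fun x => c / (x - a)) (nhdsWithin a (Set.Ioi a)) atTop := by
  have h1 : Tendsto (fun x : ℝ => x - a) (nhdsWithin a (Set.Ioi a)) (nhdsWithin 0 (Set.Ioi 0)) := by
    rw [tendsto_nhdsWithin_iff]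
    constructor
    · have h0 : Tendsto (fun x : ℝ => x - a) (nhds a) (nhds (a - a)) :=
        ((continuous_id.sub continuous_const).tendsto a)
      have := h0.mono_left (nhdsWithin_le_nhds (s := Set.Ioi a))
      simpa using this
    · filter_upwards [self_mem_nhdsWithin] with x hx
      simp only [Set.mem_Ioi] at hx ⊢; linarith
  have h2 := tendsto_inv_nhdsGT_zero.comp h1
  have h3 := h2.const_mul_atTop hc
  simpa [div_eq_mul_inv, Function.comp] using h3

lemma aux_tendsto_left (c a : ℝ) (hc : 0 < c) :
    Tendsto (fun x => c / (x - a)) (nhdsWithin a (Set.Iio a)) atBot := by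
  have h1 : Tendsto (fun x : ℝ => a - x) (nhdsWithin a (Set.Iio a)) (nhdsWithin 0 (Set.Ioi 0)) := by
    rw [tendsto_nhdsWithin_iff]
    constructor
    · have h0 : Tendsto (fun x : ℝ => a - x) (nhds a) (nhds (a - a)) :=
        ((continuous_const.sub continuous_id).tendsto a)
      have := h0.mono_left (nhdsWithin_le_nhds (s := Set.Iio a))
      simpa using this
    · filter_upwards [self_mem_nhdsWithin] with x hx
      simp only [Set.mem_Iio] at hx; simp only [Set.mem_Ioi]; linarith
  have h2 := tendsto_inv_nhdsGT_zero.comp h1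
  have h3 := h2.const_mul_atTop hc
  have h4 : Tendsto (fun x => -(c * (a - x)⁻¹)) (nhdsWithin a (Set.Iio a)) atBot :=
    tendsto_neg_atTop_atBot.comp h3
  have heq : ∀ x : ℝ, c / (x - a) = -(c * (a - x)⁻¹) := by
    intro x
    rcases eq_or_ne x a with rfl | hx
    · simp
    · rw [div_eq_mul_inv]
      have : (x - a)⁻¹ = -((a - x)⁻¹) := by
        rw [← inv_neg]; ring_nf
      rw [this]; ring
  simpa [heq] using h4

lemma aux_tendsto_top (c a : ℝ) :
    Tendsto (fun x => c / (x - a)) atTop (nhds 0) := by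
  have h1 : Tendsto (fun x : ℝ => x - a) atTop atTop :=
    tendsto_atTop_add_const_right _ (-a) tendsto_id
  have := h1.inv_tendsto_atTop
  have h2 := this.const_mul c
  simpa [div_eq_mul_inv] using h2


/-- The equation `f(x) = 1`, where `f(x) = Σ_{j=1}^{k*} (1-q) j ν(j)/(x - q j)`, has exactly
`#C` solutions among `x` with `x ≠ q j` for all `j ∈ C`, all positive: one in each interval
between consecutive points of `q·C`, one in `(q·max C, ∞)`, and none below `q·min C`. -/
theorem stmt_3 (kstar : ℕ) (hkstar : 2 ≤ kstar)
    (ν : ℕ → ℝ) (hν0 : ∀ j, 0 ≤ ν j) (hνsum : ∑ j ∈ Finset.Icc 1 kstar, ν j ≤ 1)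
    (hνk : 0 < ν kstar)
    (q : ℝ) (hq : q ∈ Set.Ioo (0 : ℝ) 1)
    (C : Finset ℕ) (hC : ∀ j, j ∈ C ↔ j ∈ Finset.Icc 1 kstar ∧ 0 < ν j)
    (hCne : C.Nonempty)
    (f : ℝ → ℝ)
    (hf : ∀ x, f x = ∑ j ∈ Finset.Icc 1 kstar, (1 - q) * j * ν j / (x - q * j)) :
    (∀ x : ℝ, (∀ j ∈ C, x ≠ q * j) → f x = 1 → 0 < x) ∧
    ({x : ℝ | (∀ j ∈ C, x ≠ q * j) ∧ f x = 1}.ncard = C.card) ∧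
    (∀ i ∈ C, ∀ i' ∈ C, i < i' → (∀ j ∈ C, ¬(i < j ∧ j < i')) →
      ∃! x : ℝ, x ∈ Set.Ioo (q * i) (q * i') ∧ f x = 1) ∧
    (∃! x : ℝ, x ∈ Set.Ioi (q * (C.max' hCne : ℕ)) ∧ f x = 1) ∧
    (∀ x : ℝ, x < q * (C.min' hCne : ℕ) → f x ≠ 1) := by
  classical
  obtain ⟨hq0, hq1⟩ := hq
  have h1k : 1 ≤ kstar := le_trans one_le_two hkstar
  have hCsub : C ⊆ Finset.Icc 1 kstar := fun j hj => ((hC j).1 hj).1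
  have hC1 : ∀ j ∈ C, 1 ≤ j := fun j hj => (Finset.mem_Icc.1 (hCsub hj)).1
  have hCk : ∀ j ∈ C, j ≤ kstar := fun j hj => (Finset.mem_Icc.1 (hCsub hj)).2
  -- f as a sum over C
  have hfC : ∀ x, f x = ∑ j ∈ C, (1 - q) * j * ν j / (x - q * j) := by
    intro x
    rw [hf]
    refine (Finset.sum_subset hCsub ?_).symm
    intro j hj hjC
    have hνj : ν j = 0 := by
      by_contra h
      exact hjC ((hC j).2 ⟨hj, lt_of_le_of_ne (hν0 j) (Ne.symm h)⟩)
    simp [hνj]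
  have hcoef : ∀ j ∈ C, 0 < (1 - q) * j * ν j := by
    intro j hj
    have h1 : (1:ℝ) ≤ (j:ℝ) := by exact_mod_cast hC1 j hj
    have h2 := ((hC j).1 hj).2
    have h3 : (0:ℝ) < 1 - q := by linarith
    exact mul_pos (mul_pos h3 (by linarith)) h2
  -- monotone ordering of poles
  have hqmono : ∀ {i j : ℕ}, i ≤ j → q * i ≤ q * j := fun h =>
    mul_le_mul_of_nonneg_left (by exact_mod_cast h) hq0.le
  have hqsmono : ∀ {i j : ℕ}, i < j → q * i < q * j := fun h =>
    mul_lt_mul_of_pos_left (by exact_mod_cast h) hq0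
  -- strict antitonicity
  have hanti : ∀ x y : ℝ, x < y → (∀ j ∈ C, q * j < x ∨ y < q * j) → f y < f x := by
    intro x y hxy hside
    rw [hfC x, hfC y]
    exact Finset.sum_lt_sum_of_nonempty hCne fun j hj =>
      aux_div_lt _ _ _ _ (hcoef j hj) hxy (hside j hj)
  -- continuity away from poles of C
  have hcont : ∀ s : Set ℝ, (∀ x ∈ s, ∀ j ∈ C, x ≠ q * j) → ContinuousOn f s := by
    intro s hs
    have : ContinuousOn (fun x => ∑ j ∈ C, (1 - q) * j * ν j / (x - q * j)) s := by
      apply continuousOn_finset_sum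
      intro j hj
      apply ContinuousOn.div continuousOn_const
      · exact (continuous_id.sub continuous_const).continuousOn
      · intro x hx
        have := hs x hx j hj
        intro h0
        exact this (by linarith [sub_eq_zero.1 h0])
    exact this.congr fun x _ => hfC x
  -- limits at poles
  have hrest : ∀ i ∈ C, ContinuousAt (fun x => ∑ j ∈ C.erase i, (1 - q) * j * ν j / (x - q * j)) (q * i) := by
    intro i hi
    apply tendsto_finset_sum
    intro j hj
    apply ContinuousAt.tendsto
    have hji : j ≠ i := Finset.ne_of_mem_erase hj
    apply ContinuousAt.div continuousAt_const
    · exact (continuous_id.sub continuous_const).continuousAt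
    · intro h0
      have h1 : q * (i:ℝ) = q * j := sub_eq_zero.1 h0
      have h2 : (i:ℝ) = j := mul_left_cancel₀ hq0.ne' h1
      exact hji (by exact_mod_cast h2.symm)
  have hsplit : ∀ i ∈ C, ∀ x : ℝ,
      f x = (1 - q) * i * ν i / (x - q * i) + ∑ j ∈ C.erase i, (1 - q) * j * ν j / (x - q * j) := by
    intro i hi x
    rw [hfC x, ← Finset.add_sum_erase _ _ hi]
  have hlim_right : ∀ i ∈ C, Tendsto f (nhdsWithin (q * i) (Set.Ioi (q * i))) atTop := by
    intro i hi
    have h1 := aux_tendsto_right ((1 - q) * i * ν i) (q * i) (hcoef i hi)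
    have h2 := ((hrest i hi).tendsto).mono_left (nhdsWithin_le_nhds (s := Set.Ioi (q * i)))
    have := h1.atTop_add h2
    exact this.congr fun x => (hsplit i hi x).symm
  have hlim_left : ∀ i ∈ C, Tendsto f (nhdsWithin (q * i) (Set.Iio (q * i))) atBot := by
    intro i hi
    have h1 := aux_tendsto_left ((1 - q) * i * ν i) (q * i) (hcoef i hi)
    have h2 := ((hrest i hi).tendsto).mono_left (nhdsWithin_le_nhds (s := Set.Iio (q * i)))
    have := h1.atBot_add h2
    exact this.congr fun x => (hsplit i hi x).symm
  have hlim_top : Tendsto f atTop (nhds 0) := by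
    have : Tendsto (fun x => ∑ j ∈ C, (1 - q) * j * ν j / (x - q * j)) atTop (nhds (∑ j ∈ C, (0:ℝ))) := by
      apply tendsto_finset_sum
      intro j hj
      exact aux_tendsto_top _ _
    simp only [Finset.sum_const, smul_zero] at this
    exact this.congr fun x => (hfC x).symm
  -- f is nonpositive below all poles
  have hlow : ∀ x : ℝ, (∀ j ∈ C, x < q * j) → f x ≤ 0 := by
    intro x hx
    rw [hfC x]
    apply Finset.sum_nonpos
    intro j hj
    apply div_nonpos_of_nonneg_of_nonpos (hcoef j hj).le
    linarith [hx j hj]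
  -- existence of a solution in a gap interval
  have hexIoo : ∀ i ∈ C, ∀ i' ∈ C, i < i' → (∀ j ∈ C, ¬(i < j ∧ j < i')) →
      ∃ x ∈ Set.Ioo (q * i) (q * i'), f x = 1 := by
    intro i hi i' hi' hii' hbetween
    have hqii : q * i < q * i' := hqsmono hii'
    -- point a near q*i with f a > 1
    have ev1 : ∀ᶠ x in nhdsWithin (q * i) (Set.Ioi (q * i)),
        1 < f x ∧ x ∈ Set.Ioo (q * i) (q * i') := by
      filter_upwards [(hlim_right i hi).eventually_gt_atTop 1,
        Ioo_mem_nhdsGT_of_mem (Set.left_mem_Ico.2 hqii)] with x h1 h2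
      exact ⟨h1, h2⟩
    obtain ⟨a, ha1, ha2⟩ := ev1.exists
    have ev2 : ∀ᶠ x in nhdsWithin (q * i') (Set.Iio (q * i')),
        f x < 1 ∧ x ∈ Set.Ioo a (q * i') := by
      filter_upwards [(hlim_left i' hi').eventually_lt_atBot 1,
        Ioo_mem_nhdsLT_of_mem (Set.right_mem_Ioc.2 ha2.2)] with x h1 h2
      exact ⟨h1, h2⟩
    obtain ⟨b, hb1, hb2⟩ := ev2.exists
    have hab : a ≤ b := hb2.1.le
    have hsub : Set.Icc a b ⊆ Set.Ioo (q * i) (q * i') := fun x hx =>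
      ⟨lt_of_lt_of_le ha2.1 hx.1, lt_of_le_of_lt hx.2 hb2.2⟩
    have hcont' : ContinuousOn f (Set.Icc a b) := by
      apply hcont
      intro x hx j hj
      have hx' := hsub hx
      rcases lt_or_ge i j with h | h
      · have : i' ≤ j := by
          by_contra hcon
          exact hbetween j hj ⟨h, lt_of_not_ge hcon⟩
        have := hqmono this
        exact ne_of_lt (lt_of_lt_of_le hx'.2 this)
      · have := hqmono h
        exact (ne_of_lt (lt_of_le_of_lt this hx'.1)).symm
    have h1mem : (1:ℝ) ∈ Set.Icc (f b) (f a) := ⟨hb1.le, ha1.le⟩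
    obtain ⟨x, hx, hfx⟩ := intermediate_value_Icc' hab hcont' h1mem
    exact ⟨x, hsub hx, hfx⟩
  -- existence of a solution above the max
  have hexIoi : ∃ x ∈ Set.Ioi (q * (C.max' hCne : ℕ)), f x = 1 := by
    set M := C.max' hCne with hM
    have hMC : M ∈ C := C.max'_mem hCne
    have ev1 : ∀ᶠ x in nhdsWithin (q * M) (Set.Ioi (q * M)),
        1 < f x ∧ x ∈ Set.Ioi (q * M) := by
      filter_upwards [(hlim_right M hMC).eventually_gt_atTop 1, self_mem_nhdsWithin] with x h1 h2
      exact ⟨h1, h2⟩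
    obtain ⟨a, ha1, ha2⟩ := ev1.exists
    have ev2 : ∀ᶠ x in atTop, f x < 1 ∧ a < x := by
      filter_upwards [hlim_top.eventually_lt_const one_pos, eventually_gt_atTop a] with x h1 h2
      exact ⟨h1, h2⟩
    obtain ⟨b, hb1, hb2⟩ := ev2.exists
    have hab : a ≤ b := hb2.le
    have hsub : Set.Icc a b ⊆ Set.Ioi (q * M) := fun x hx => lt_of_lt_of_le ha2 hx.1
    have hcont' : ContinuousOn f (Set.Icc a b) := by
      apply hcont
      intro x hx j hj
      have := hqmono (C.le_max' j hj)
      exact (ne_of_lt (lt_of_le_of_lt this (hsub hx))).symm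
    have h1mem : (1:ℝ) ∈ Set.Icc (f b) (f a) := ⟨hb1.le, ha1.le⟩
    obtain ⟨x, hx, hfx⟩ := intermediate_value_Icc' hab hcont' h1mem
    exact ⟨x, hsub hx, hfx⟩
  -- positivity of solutions (part 1)
  have hmC : C.min' hCne ∈ C := C.min'_mem hCne
  have hm1 : 1 ≤ C.min' hCne := hC1 _ hmC
  have hqm0 : 0 < q * (C.min' hCne : ℕ) := by
    have : (1:ℝ) ≤ (C.min' hCne : ℕ) := by exact_mod_cast hm1
    nlinarith
  have hpart5 : ∀ x : ℝ, x < q * (C.min' hCne : ℕ) → f x ≠ 1 := by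
    intro x hx hfx
    have : f x ≤ 0 := hlow x fun j hj =>
      lt_of_lt_of_le hx (hqmono (C.min'_le j hj))
    linarith
  have hpart1 : ∀ x : ℝ, (∀ j ∈ C, x ≠ q * j) → f x = 1 → 0 < x := by
    intro x hxne hfx
    rcases lt_or_ge x (q * (C.min' hCne : ℕ)) with h | h
    · exact absurd hfx (hpart5 x h)
    · linarith
  -- uniqueness in Ioo intervals (part 3)
  have hpart3 : ∀ i ∈ C, ∀ i' ∈ C, i < i' → (∀ j ∈ C, ¬(i < j ∧ j < i')) →
      ∃! x : ℝ, x ∈ Set.Ioo (q * i) (q * i') ∧ f x = 1 := by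
    intro i hi i' hi' hii' hbet
    obtain ⟨x, hx, hfx⟩ := hexIoo i hi i' hi' hii' hbet
    refine ⟨x, ⟨hx, hfx⟩, ?_⟩
    rintro y ⟨hy, hfy⟩
    have key : ∀ u v : ℝ, u ∈ Set.Ioo (q * i) (q * i') → v ∈ Set.Ioo (q * i) (q * i') →
        u < v → f v < f u := by
      intro u v hu hv huv
      apply hanti u v huv
      intro j hj
      rcases le_or_gt j i with h | h
      · exact Or.inl (lt_of_le_of_lt (hqmono h) hu.1)
      · have : i' ≤ j := by
          by_contra hcon
          exact hbet j hj ⟨h, lt_of_not_ge hcon⟩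
        exact Or.inr (lt_of_lt_of_le hv.2 (hqmono this))
    rcases lt_trichotomy y x with h | h | h
    · have := key y x hy hx h; rw [hfx, hfy] at this; exact absurd this (lt_irrefl _)
    · exact h
    · have := key x y hx hy h; rw [hfx, hfy] at this; exact absurd this (lt_irrefl _)
  -- uniqueness in Ioi (part 4)
  have hpart4 : ∃! x : ℝ, x ∈ Set.Ioi (q * (C.max' hCne : ℕ)) ∧ f x = 1 := by
    obtain ⟨x, hx, hfx⟩ := hexIoi
    refine ⟨x, ⟨hx, hfx⟩, ?_⟩
    rintro y ⟨hy, hfy⟩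
    have key : ∀ u v : ℝ, u ∈ Set.Ioi (q * (C.max' hCne : ℕ)) → u < v → f v < f u := by
      intro u v hu huv
      apply hanti u v huv
      intro j hj
      exact Or.inl (lt_of_le_of_lt (hqmono (C.le_max' j hj)) hu)
    rcases lt_trichotomy y x with h | h | h
    · have := key y x hy h; rw [hfx, hfy] at this; exact absurd this (lt_irrefl _)
    · exact h
    · have := key x y hx h; rw [hfx, hfy] at this; exact absurd this (lt_irrefl _)
  -- counting (part 2)
  have hpart2 : ({x : ℝ | (∀ j ∈ C, x ≠ q * j) ∧ f x = 1}.ncard = C.card) := by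
    set S : Set ℝ := {x : ℝ | (∀ j ∈ C, x ≠ q * j) ∧ f x = 1} with hS
    set φ : ℝ → ℕ := fun x => (C.filter fun j : ℕ => q * (j:ℝ) < x).sup id with hφ
    -- basic facts about φ on S
    have hSfacts : ∀ x ∈ S, φ x ∈ C ∧ q * (φ x) < x := by
      intro x hxS
      obtain ⟨hxne, hfx⟩ := hxS
      have hmx : q * (C.min' hCne : ℕ) < x := by
        rcases lt_or_ge (q * (C.min' hCne : ℕ)) x with h | h
        · exact h
        · rcases eq_or_lt_of_le h with h' | h'
          · exact absurd h' (hxne _ hmC)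
          · exact absurd hfx (hpart5 x h')
      have hne : (C.filter fun j : ℕ => q * (j:ℝ) < x).Nonempty :=
        ⟨C.min' hCne, Finset.mem_filter.2 ⟨hmC, hmx⟩⟩
      obtain ⟨b, hb, hsup⟩ := Finset.exists_mem_eq_sup _ hne id
      simp only [hφ, id] at hsup ⊢
      rw [hsup]
      exact ⟨(Finset.mem_filter.1 hb).1, (Finset.mem_filter.1 hb).2⟩
    have hφub : ∀ x : ℝ, ∀ j ∈ C, q * j < x → j ≤ φ x := by
      intro x j hj h
      simp only [hφ]
      exact Finset.le_sup (f := id) (Finset.mem_filter.2 ⟨hj, h⟩)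
    -- injectivity
    have hinj : Set.InjOn φ S := by
      have key : ∀ x ∈ S, ∀ y ∈ S, x < y → φ x = φ y → False := by
        intro x hxS y hyS hxy hφeq
        have h1 : f y < f x := by
          apply hanti x y hxy
          intro j hj
          rcases le_or_gt j (φ x) with h | h
          · exact Or.inl (lt_of_le_of_lt (hqmono h) (hSfacts x hxS).2)
          · rw [hφeq] at h
            have hyle : y ≤ q * j := by
              by_contra hcon
              exact absurd (hφub y j hj (lt_of_not_ge hcon)) (not_le.2 h)
            rcases eq_or_lt_of_le hyle with h' | h'
            · exact absurd h' (hyS.1 j hj)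
            · exact Or.inr h'
        rw [hxS.2, hyS.2] at h1
        exact absurd h1 (lt_irrefl _)
      intro x hx y hy hφeq
      rcases lt_trichotomy x y with h | h | h
      · exact absurd (key x hx y hy h hφeq) id
      · exact h
      · exact absurd (key y hy x hx h hφeq.symm) id
    -- image
    have himg : φ '' S = (C : Set ℕ) := by
      ext i
      simp only [Set.mem_image, Finset.coe_sort_coe, Finset.mem_coe]
      constructor
      · rintro ⟨x, hxS, rfl⟩
        exact (hSfacts x hxS).1
      · intro hi
        by_cases hmax : i = C.max' hCne
        · obtain ⟨x, hx, hfx⟩ := hexIoi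
          have hxS : x ∈ S := by
            refine ⟨fun j hj => ?_, hfx⟩
            exact (ne_of_lt (lt_of_le_of_lt (hqmono (C.le_max' j hj)) hx)).symm
          refine ⟨x, hxS, ?_⟩
          subst hmax
          simp only [hφ]
          apply le_antisymm
          · apply Finset.sup_le
            intro j hj
            exact C.le_max' j (Finset.mem_filter.1 hj).1
          · exact Finset.le_sup (f := id) (Finset.mem_filter.2 ⟨C.max'_mem hCne, hx⟩)
        · have himax : i < C.max' hCne := lt_of_le_of_ne (C.le_max' i hi) hmax
          have hDne : (C.filter fun j => i < j).Nonempty :=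
            ⟨C.max' hCne, Finset.mem_filter.2 ⟨C.max'_mem hCne, himax⟩⟩
          set i' := (C.filter fun j => i < j).min' hDne with hi'def
          have hi'C : i' ∈ C := (Finset.mem_filter.1 ((C.filter fun j => i < j).min'_mem hDne)).1
          have hii' : i < i' := (Finset.mem_filter.1 ((C.filter fun j => i < j).min'_mem hDne)).2
          have hbet : ∀ j ∈ C, ¬(i < j ∧ j < i') := by
            rintro j hj ⟨h1, h2⟩
            exact absurd (Finset.min'_le _ j (Finset.mem_filter.2 ⟨hj, h1⟩)) (not_le.2 h2)
          obtain ⟨x, hx, hfx⟩ := hexIoo i hi i' hi'C hii' hbet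
          have hxS : x ∈ S := by
            refine ⟨fun j hj => ?_, hfx⟩
            rcases le_or_gt j i with h | h
            · exact (ne_of_lt (lt_of_le_of_lt (hqmono h) hx.1)).symm
            · have : i' ≤ j := Finset.min'_le _ j (Finset.mem_filter.2 ⟨hj, h⟩)
              exact ne_of_lt (lt_of_lt_of_le hx.2 (hqmono this))
          refine ⟨x, hxS, ?_⟩
          simp only [hφ]
          apply le_antisymm
          · apply Finset.sup_le
            intro j hj
            obtain ⟨hjC, hjx⟩ := Finset.mem_filter.1 hj
            show j ≤ i
            by_contra hcon
            have : i' ≤ j := Finset.min'_le _ j (Finset.mem_filter.2 ⟨hjC, lt_of_not_ge hcon⟩)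
            exact absurd (lt_of_lt_of_le hx.2 (hqmono this)) (not_lt.2 hjx.le)
          · exact Finset.le_sup (f := id) (Finset.mem_filter.2 ⟨hi, hx.1⟩)
    rw [← Set.ncard_coe_finset, ← himg, Set.ncard_image_of_injOn hinj]
  exact ⟨hpart1, hpart2, hpart3, hpart4, hpart5⟩
end

section
/- With the matrix A as above, if λ > 0 satisfies Σ_{j=1}^{k*} (1−q)·j·ν(j)/(λ − q·j) = 1 and λ/q ∉ C, then the vector u with u(i) = q·i/(λ − q·i) for i ∈ C and u(⋆) = 1 is a right-eigenvector of A with eigenvalue λ, i.e. Σ_j A_{i,j}·u(j) = λ·u(i) for all i ∈ C ∪ {⋆}. -/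
/-!
Everything rests on the identity `w * (a / (λ - a)) + w = λ * (w / (λ - a))`. With
`w = a = q i` it is row `i ∈ C`; summed over `j` with `w = (1 - q) j ν(j)`, `a = q j`, it turns
row `⋆` into `λ` times the left side of the equation defining `λ`, which is `1`. Indices
`j ∉ C` contribute nothing, since there `ν(j) = 0`.
-/

open Finset Matrix

theorem mul_div_sub_add_self_eq {K : Type*} [Field K] {w a lam : K} (h : lam - a ≠ 0) :
    w * (a / (lam - a)) + w = lam * (w / (lam - a)) := by
  field_simp
  ring

theorem sum_mul_div_sub_add_sum_eq {ι K : Type*} [Field K] {s : Finset ι} {w a : ι → K}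
    {lam : K} (hne : ∀ j ∈ s, w j ≠ 0 → lam ≠ a j) (hsec : ∑ j ∈ s, w j / (lam - a j) = 1) :
    ∑ j ∈ s, w j * (a j / (lam - a j)) + ∑ j ∈ s, w j = lam := by
  calc ∑ j ∈ s, w j * (a j / (lam - a j)) + ∑ j ∈ s, w j
      = ∑ j ∈ s, lam * (w j / (lam - a j)) := by
        rw [← sum_add_distrib]
        refine sum_congr rfl fun j hj => ?_
        by_cases hw : w j = 0
        · simp [hw]
        · exact mul_div_sub_add_self_eq (sub_ne_zero.mpr (hne j hj hw))
    _ = lam := by rw [← mul_sum, hsec, mul_one]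

theorem stmt_5_general (kstar : ℕ)
    (ν : ℕ → ℝ) (hν0 : ∀ j, 0 ≤ ν j)
    (q : ℝ)
    (C : Finset ℕ) (hC : ∀ j, j ∈ C ↔ j ∈ Finset.Icc 1 kstar ∧ 0 < ν j)
    (lam : ℝ) (hlamC : ∀ j ∈ C, lam ≠ q * j)
    (heq : ∑ j ∈ Finset.Icc 1 kstar, (1 - q) * j * ν j / (lam - q * j) = 1)
    (A : Matrix ((↥C) ⊕ Unit) ((↥C) ⊕ Unit) ℝ)
    (hAcc : ∀ i j : ↥C, A (Sum.inl i) (Sum.inl j) = if (i : ℕ) = (j : ℕ) then q * (i : ℕ) else 0)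
    (hAcs : ∀ i : ↥C, A (Sum.inl i) (Sum.inr ()) = q * (i : ℕ))
    (hAsc : ∀ j : ↥C, A (Sum.inr ()) (Sum.inl j) = (1 - q) * (j : ℕ) * ν j)
    (hAss : A (Sum.inr ()) (Sum.inr ()) = (1 - q) * ∑ j ∈ Finset.Icc 1 kstar, (j : ℝ) * ν j)
    (u : ((↥C) ⊕ Unit) → ℝ)
    (huC : ∀ i : ↥C, u (Sum.inl i) = q * (i : ℕ) / (lam - q * (i : ℕ)))
    (hus : u (Sum.inr ()) = 1) :
    Matrix.mulVec A u = lam • u := by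
  have hν_off : ∀ j ∈ Icc 1 kstar, j ∉ C → ν j = 0 := fun j hj hjC =>
    (hν0 j).eq_or_lt.elim Eq.symm fun hpos => absurd ((hC j).mpr ⟨hj, hpos⟩) hjC
  funext x
  simp only [mulVec, dotProduct, Fintype.sum_sum_type, univ_unique, sum_singleton,
    Pi.smul_apply, smul_eq_mul]
  rcases x with i | ⟨⟩
  · have hdiag : ∑ j : C, A (.inl i) (.inl j) * u (.inl j) = q * i * u (.inl i) :=
      (Fintype.sum_eq_single i fun j hji => by
        rw [hAcc, if_neg fun h => hji (Subtype.ext h.symm), zero_mul]).trans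
        (by rw [hAcc, if_pos rfl])
    rw [hdiag, hAcs, hus, huC, mul_one]
    exact mul_div_sub_add_self_eq (sub_ne_zero.mpr (hlamC i i.2))
  · have hC_to_Icc : ∑ j : C, A (.inr ()) (.inl j) * u (.inl j)
        = ∑ j ∈ Icc 1 kstar, (1 - q) * j * ν j * (q * j / (lam - q * j)) := by
      simp only [hAsc, huC]
      rw [sum_coe_sort C fun j : ℕ => (1 - q) * j * ν j * (q * j / (lam - q * j))]
      exact sum_subset (fun j hj => ((hC j).mp hj).1) fun j hj hjC => by
        simp [hν_off j hj hjC]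
    rw [hC_to_Icc, hAss, hus, mul_sum]
    simp only [mul_one, ← mul_assoc]
    refine sum_mul_div_sub_add_sum_eq (fun j hj hw => hlamC j ((hC j).mpr ⟨hj, ?_⟩)) heq
    exact (hν0 j).lt_of_ne fun h => hw (by simp [← h])

/-- If `λ > 0` solves `Σ_j (1-q) j ν(j)/(λ - q j) = 1` with `λ/q ∉ C`, then
`u(i) = q i/(λ - q i)`, `u(⋆) = 1` is a right-eigenvector of the replacement
matrix `A` with eigenvalue `λ`. -/
theorem stmt_5 (kstar : ℕ) (hkstar : 2 ≤ kstar)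
    (ν : ℕ → ℝ) (hν0 : ∀ j, 0 ≤ ν j) (hνsum : ∑ j ∈ Finset.Icc 1 kstar, ν j ≤ 1)
    (hνk : 0 < ν kstar)
    (q : ℝ) (hq : q ∈ Set.Ioo (0 : ℝ) 1)
    (C : Finset ℕ) (hC : ∀ j, j ∈ C ↔ j ∈ Finset.Icc 1 kstar ∧ 0 < ν j)
    (lam : ℝ) (hlam : 0 < lam) (hlamC : ∀ j ∈ C, lam ≠ q * j)
    (heq : ∑ j ∈ Finset.Icc 1 kstar, (1 - q) * j * ν j / (lam - q * j) = 1)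
    (A : Matrix ((↥C) ⊕ Unit) ((↥C) ⊕ Unit) ℝ)
    (hAcc : ∀ i j : ↥C, A (Sum.inl i) (Sum.inl j) = if (i : ℕ) = (j : ℕ) then q * (i : ℕ) else 0)
    (hAcs : ∀ i : ↥C, A (Sum.inl i) (Sum.inr ()) = q * (i : ℕ))
    (hAsc : ∀ j : ↥C, A (Sum.inr ()) (Sum.inl j) = (1 - q) * (j : ℕ) * ν j)
    (hAss : A (Sum.inr ()) (Sum.inr ()) = (1 - q) * ∑ j ∈ Finset.Icc 1 kstar, (j : ℝ) * ν j)
    (u : ((↥C) ⊕ Unit) → ℝ)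
    (huC : ∀ i : ↥C, u (Sum.inl i) = q * (i : ℕ) / (lam - q * (i : ℕ)))
    (hus : u (Sum.inr ()) = 1) :
    Matrix.mulVec A u = lam • u :=
  stmt_5_general kstar ν hν0 q C hC lam hlamC heq A hAcc hAcs hAsc hAss u huC hus
end

section
/- Let (M_n)_{n≥0} be a nonnegative martingale with M_0 = 1 on a filtered probability space (Ω, F, (F_n), P), and let P̄ be the probability measure satisfying P̄(A) = E(M_n·1_A) for all A ∈ F_n and all n (the martingale change of measure on F_∞ = σ(∪F_n)). Then, writing M_∞ = lim M_n (which exists P-a.s. and P̄-a.s., allowing value +∞ under P̄), one has E(M_∞) = P̄(M_∞ < ∞). In particular, if M_∞ < ∞ P̄-a.s. then M is uniformly integrable under P, and if M_∞ = ∞ P̄-a.s. then M_∞ = 0 P-a.s. -/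
/-!
Put `Q = P + P̄`. On `ℱ n` the measure `P` has `Q`-density `(1 + M n)⁻¹`, so by Lévy's upward
theorem these densities converge `Q`-a.s. to `ρ = dP/dQ`, and hence `M n → ρ⁻¹ - 1` `Q`-a.s.
Since `dP̄/dQ = 1 - ρ`, we get `E_P[ρ⁻¹ - 1] = ∫ ρ (ρ⁻¹ - 1) dQ = ∫_{ρ ≠ 0} (1 - ρ) dQ = P̄(ρ ≠ 0)`,
and `ρ ≠ 0` is exactly the event `M_∞ < ∞`. For uniform integrability,
`E_P[M n; M n ≥ k] = P̄(M n ≥ k) ≤ P̄(sup_m M m ≥ k)`, which tends to `0` when `sup_m M m` is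
`P̄`-a.s. finite.
-/

open MeasureTheory Filter Set Topology
open scoped ENNReal NNReal

namespace MeasureTheory

variable {Ω : Type*} {m0 : MeasurableSpace Ω}

theorem setLIntegral_eq_setLIntegral_mul_of_forall_eq {μ ν : Measure Ω} {m : MeasurableSpace Ω}
    (hm : m ≤ m0) {g f : Ω → ℝ≥0∞} (hg : Measurable[m] g) (hf : Measurable[m] f)
    (hν : ∀ s, MeasurableSet[m] s → ν s = ∫⁻ ω in s, g ω ∂μ) {s : Set Ω}
    (hs : MeasurableSet[m] s) :
    ∫⁻ ω in s, f ω ∂ν = ∫⁻ ω in s, f ω * g ω ∂μ := by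
  have htrim : ν.trim hm = (μ.trim hm).withDensity g := by
    refine @Measure.ext _ m _ _ fun t ht => ?_
    rw [trim_measurableSet_eq hm ht, hν t ht, @withDensity_apply _ m _ _ _ ht,
      setLIntegral_trim hm hg ht]
  rw [← setLIntegral_trim hm hf hs, htrim,
    @setLIntegral_withDensity_eq_setLIntegral_mul _ m _ _ _ hg hf _ hs,
    setLIntegral_trim hm (hg.mul hf) hs]
  simp only [Pi.mul_apply, mul_comm]

theorem setLIntegral_inv_one_add_eq_of_forall_eq {μ ν : Measure Ω} {m : MeasurableSpace Ω}
    (hm : m ≤ m0) {g : Ω → ℝ≥0∞} (hg : Measurable[m] g) (hg_top : ∀ ω, g ω ≠ ∞)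
    (hν : ∀ s, MeasurableSet[m] s → ν s = ∫⁻ ω in s, g ω ∂μ) {s : Set Ω}
    (hs : MeasurableSet[m] s) :
    ∫⁻ ω in s, (1 + g ω)⁻¹ ∂(μ + ν) = μ s := by
  have hinv : Measurable[m] fun ω => (1 + g ω)⁻¹ := (measurable_const.add hg).inv
  calc ∫⁻ ω in s, (1 + g ω)⁻¹ ∂(μ + ν)
      = ∫⁻ ω in s, (1 + g ω)⁻¹ ∂μ + ∫⁻ ω in s, (1 + g ω)⁻¹ * g ω ∂μ := by
        rw [Measure.restrict_add, lintegral_add_measure,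
          setLIntegral_eq_setLIntegral_mul_of_forall_eq hm hg hinv hν hs]
    _ = ∫⁻ ω in s, (1 + g ω)⁻¹ * (1 + g ω) ∂μ := by
        rw [← lintegral_add_left (hinv.mono hm le_rfl)]
        simp only [mul_add, mul_one]
    _ = μ s := by
        rw [setLIntegral_congr_fun (hm s hs) fun ω _ =>
          ENNReal.inv_mul_cancel (by simp) (by simp [hg_top ω]), setLIntegral_one]

theorem ae_tendsto_toReal_rnDeriv_of_forall_setLIntegral_eq {ℱ : Filtration ℕ m0}
    (hℱ : m0 = ⨆ n, ℱ n) {P Q : Measure Ω} [IsFiniteMeasure P] [IsFiniteMeasure Q] (hPQ : P ≪ Q)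
    {L : ℕ → Ω → ℝ} (hL : StronglyAdapted ℱ L) (hL0 : ∀ n ω, 0 ≤ L n ω)
    (hP : ∀ n s, MeasurableSet[ℱ n] s → ∫⁻ ω in s, ENNReal.ofReal (L n ω) ∂Q = P s) :
    ∀ᵐ ω ∂Q, Tendsto (fun n => L n ω) atTop (𝓝 (P.rnDeriv Q ω).toReal) := by
  have hρ : StronglyMeasurable[⨆ n, ℱ n] fun ω => (P.rnDeriv Q ω).toReal := by
    rw [← hℱ]; exact (Measure.measurable_rnDeriv P Q).ennreal_toReal.stronglyMeasurable
  have hcond : ∀ n, L n =ᵐ[Q] Q[fun ω => (P.rnDeriv Q ω).toReal | ℱ n] := fun n => by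
    have hsetIntegral : ∀ s, MeasurableSet[ℱ n] s → ∫ ω in s, L n ω ∂Q = P.real s := fun s hs => by
      rw [integral_eq_lintegral_of_nonneg_ae (ae_of_all _ (hL0 n))
        ((hL n).mono (ℱ.le n)).aestronglyMeasurable, hP n s hs, measureReal_def]
    have hint : Integrable (L n) Q := by
      refine ⟨((hL n).mono (ℱ.le n)).aestronglyMeasurable, ?_⟩
      rw [hasFiniteIntegral_iff_ofReal (ae_of_all _ (hL0 n)), ← setLIntegral_univ,
        hP n _ MeasurableSet.univ]
      exact measure_lt_top P univ
    refine ae_eq_condExp_of_forall_setIntegral_eq (ℱ.le n) Measure.integrable_toReal_rnDeriv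
      (fun s _ _ => hint.integrableOn) (fun s hs _ => ?_) (hL n).aestronglyMeasurable
    rw [hsetIntegral s hs, Measure.setIntegral_toReal_rnDeriv hPQ]
  filter_upwards [Measure.integrable_toReal_rnDeriv.tendsto_ae_condExp hρ, ae_all_iff.2 hcond]
    with ω hω hLω
  simpa only [hLω] using hω

theorem ae_tendsto_inv_rnDeriv_add_sub_one {ℱ : Filtration ℕ m0} (hℱ : m0 = ⨆ n, ℱ n)
    {P Pbar : Measure Ω} [IsFiniteMeasure P] [IsFiniteMeasure Pbar] {M : ℕ → Ω → ℝ}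
    (hM : StronglyAdapted ℱ M) (hM_nonneg : ∀ n ω, 0 ≤ M n ω)
    (hPbar : ∀ n s, MeasurableSet[ℱ n] s → Pbar s = ∫⁻ ω in s, ENNReal.ofReal (M n ω) ∂P) :
    ∀ᵐ ω ∂(P + Pbar), Tendsto (fun n => ENNReal.ofReal (M n ω)) atTop
      (𝓝 ((P.rnDeriv (P + Pbar) ω)⁻¹ - 1)) := by
  set L : ℕ → Ω → ℝ := fun n ω => (1 + M n ω)⁻¹
  have hL_eq : ∀ n ω, ENNReal.ofReal (L n ω) = (1 + ENNReal.ofReal (M n ω))⁻¹ := fun n ω => by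
    rw [ENNReal.ofReal_inv_of_pos (by linarith [hM_nonneg n ω]),
      ENNReal.ofReal_add zero_le_one (hM_nonneg n ω), ENNReal.ofReal_one]
  have hL : StronglyAdapted ℱ L := fun n => by
    have hMn : Measurable[ℱ n] (M n) := (hM n).measurable
    exact (hMn.const_add 1).inv.stronglyMeasurable
  have hL_density : ∀ n s, MeasurableSet[ℱ n] s →
      ∫⁻ ω in s, ENNReal.ofReal (L n ω) ∂(P + Pbar) = P s := fun n s hs => by
    simp_rw [hL_eq]
    exact setLIntegral_inv_one_add_eq_of_forall_eq (ℱ.le n)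
      (ENNReal.measurable_ofReal.comp (hM n).measurable) (fun _ => ENNReal.ofReal_ne_top)
      (hPbar n) hs
  filter_upwards [ae_tendsto_toReal_rnDeriv_of_forall_setLIntegral_eq hℱ
      (Measure.AbsolutelyContinuous.rfl.add_right Pbar) hL
      (fun n ω => inv_nonneg.2 (by linarith [hM_nonneg n ω])) hL_density,
    Measure.rnDeriv_ne_top P (P + Pbar)] with ω hω hfin
  have hLω : Tendsto (fun n => ENNReal.ofReal (L n ω)) atTop (𝓝 (P.rnDeriv (P + Pbar) ω)) := by
    simpa only [ENNReal.ofReal_toReal hfin, Function.comp_def] using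
      (ENNReal.continuous_ofReal.tendsto _).comp hω
  refine (((ENNReal.continuous_sub_right 1).comp continuous_inv).tendsto _).comp hLω
    |>.congr fun n => ?_
  simp only [Function.comp_apply, hL_eq, inv_inv, ENNReal.add_sub_cancel_left ENNReal.one_ne_top]

theorem Measure.withDensity_one_sub_rnDeriv_add (μ ν : Measure Ω) [IsFiniteMeasure μ]
    [IsFiniteMeasure ν] :
    (μ + ν).withDensity (1 - μ.rnDeriv (μ + ν)) = ν := by
  rw [Measure.withDensity_sub measurable_one (Measure.measurable_rnDeriv _ _),
    Measure.withDensity_rnDeriv_eq _ _ (Measure.AbsolutelyContinuous.rfl.add_right ν),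
    withDensity_one, add_comm, Measure.add_sub_cancel]

theorem Measure.lintegral_inv_rnDeriv_add_sub_one (μ ν : Measure Ω) [IsFiniteMeasure μ]
    [IsFiniteMeasure ν] :
    ∫⁻ ω, (μ.rnDeriv (μ + ν) ω)⁻¹ - 1 ∂μ = ν {ω | μ.rnDeriv (μ + ν) ω ≠ 0} := by
  set ρ := μ.rnDeriv (μ + ν)
  have hρ : Measurable ρ := Measure.measurable_rnDeriv _ _
  have hρ0 : MeasurableSet {ω | ρ ω ≠ 0} := (hρ (measurableSet_singleton 0)).compl
  have hmul : (fun ω => ρ ω * ((ρ ω)⁻¹ - 1)) =ᵐ[μ + ν]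
      {ω | ρ ω ≠ 0}.indicator (1 - ρ) := by
    filter_upwards [Measure.rnDeriv_ne_top μ (μ + ν)] with ω hω
    by_cases h0 : ρ ω = 0
    · simp [h0]
    · rw [indicator_of_mem h0, ENNReal.mul_sub (fun _ _ => hω), mul_one,
        ENNReal.mul_inv_cancel h0 hω, Pi.sub_apply, Pi.one_apply]
  rw [← lintegral_rnDeriv_mul (Measure.AbsolutelyContinuous.rfl.add_right ν)
    (by fun_prop), lintegral_congr_ae hmul, lintegral_indicator hρ0, ← withDensity_apply _ hρ0,
    Measure.withDensity_one_sub_rnDeriv_add]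

theorem uniformIntegrable_of_forall_setLIntegral_eq {ℱ : Filtration ℕ m0} {P Pbar : Measure Ω}
    [IsFiniteMeasure P] [IsFiniteMeasure Pbar] {M : ℕ → Ω → ℝ} (hM : StronglyAdapted ℱ M)
    (hM_nonneg : ∀ n ω, 0 ≤ M n ω)
    (hPbar : ∀ n s, MeasurableSet[ℱ n] s → Pbar s = ∫⁻ ω in s, ENNReal.ofReal (M n ω) ∂P)
    (hbdd : ∀ᵐ ω ∂Pbar, BddAbove (range fun n => M n ω)) :
    UniformIntegrable M 1 P := by
  set A : ℕ → Set Ω := fun k => ⋃ n, {ω | (k : ℝ) ≤ M n ω}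
  have hA : ∀ k, MeasurableSet (A k) := fun k =>
    .iUnion fun n => measurableSet_le measurable_const ((hM n).mono (ℱ.le n)).measurable
  have hA_null : Pbar (⋂ k, A k) = 0 := by
    refine measure_mono_null (fun ω hω => ?_) (ae_iff.1 hbdd)
    rintro ⟨b, hb⟩
    obtain ⟨k, hk⟩ := exists_nat_gt b
    obtain ⟨n, hn⟩ := mem_iUnion.1 (mem_iInter.1 hω k)
    exact (hk.trans_le hn).not_ge (hb (mem_range_self n))
  have hA_tendsto : Tendsto (fun k => Pbar (A k)) atTop (𝓝 0) := hA_null ▸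
    tendsto_measure_iInter_atTop (fun k => (hA k).nullMeasurableSet)
      (fun i j hij => iUnion_mono fun n ω (hω : (j : ℝ) ≤ M n ω) =>
        (Nat.cast_le.2 hij).trans hω) ⟨0, measure_ne_top _ _⟩
  refine uniformIntegrable_of le_rfl ENNReal.one_ne_top
    (fun n => ((hM n).mono (ℱ.le n)).aestronglyMeasurable) fun ε hε => ?_
  obtain ⟨k, hk⟩ := (hA_tendsto.eventually_lt_const (ENNReal.ofReal_pos.2 hε)).exists
  refine ⟨k, fun i => ?_⟩
  set s := {ω | (k : ℝ≥0) ≤ ‖M i ω‖₊}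
  have hs : MeasurableSet[ℱ i] s := measurable_nnnorm.comp (hM i).measurable measurableSet_Ici
  calc eLpNorm (s.indicator (M i)) 1 P = Pbar s := by
        rw [eLpNorm_one_eq_lintegral_enorm, hPbar i s hs,
          ← lintegral_indicator (ℱ.le i s hs)]
        simp_rw [enorm_indicator_eq_indicator_enorm, Real.enorm_eq_ofReal (hM_nonneg _ _)]
    _ ≤ Pbar (A k) := measure_mono fun ω (hω : (k : ℝ≥0) ≤ ‖M i ω‖₊) => mem_iUnion.2
        ⟨i, by simpa [← NNReal.coe_le_coe, Real.norm_of_nonneg (hM_nonneg i ω)] using hω⟩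
    _ ≤ ENNReal.ofReal ε := hk.le

end MeasureTheory

theorem stmt_18_general {Ω : Type*} {m0 : MeasurableSpace Ω}
    (P : Measure Ω) [IsProbabilityMeasure P]
    (ℱ : Filtration ℕ m0) (hℱ : m0 = ⨆ n, ℱ n)
    (M : ℕ → Ω → ℝ) (hM : Martingale M ℱ P)
    (hMnonneg : ∀ n ω, 0 ≤ M n ω)
    (Pbar : Measure Ω) [IsProbabilityMeasure Pbar]
    (hPbar : ∀ n, ∀ s : Set Ω, MeasurableSet[ℱ n] s →
      Pbar s = ∫⁻ ω in s, ENNReal.ofReal (M n ω) ∂P)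
    (Mlim : Ω → ENNReal)
    (hMlim : ∀ ω, Mlim ω = Filter.limsup (fun n => ENNReal.ofReal (M n ω)) atTop) :
    (∀ᵐ ω ∂P, Tendsto (fun n => ENNReal.ofReal (M n ω)) atTop (nhds (Mlim ω))) ∧
    (∀ᵐ ω ∂Pbar, Tendsto (fun n => ENNReal.ofReal (M n ω)) atTop (nhds (Mlim ω))) ∧
    (∫⁻ ω, Mlim ω ∂P = Pbar {ω | Mlim ω < ⊤}) ∧
    ((∀ᵐ ω ∂Pbar, Mlim ω < ⊤) → UniformIntegrable M 1 P) ∧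
    ((∀ᵐ ω ∂Pbar, Mlim ω = ⊤) → ∀ᵐ ω ∂P, Mlim ω = 0) := by
  set ρ := P.rnDeriv (P + Pbar)
  have hlim : ∀ᵐ ω ∂(P + Pbar), Tendsto (fun n => ENNReal.ofReal (M n ω)) atTop (𝓝 (Mlim ω)) ∧
      Mlim ω = (ρ ω)⁻¹ - 1 := by
    filter_upwards [ae_tendsto_inv_rnDeriv_add_sub_one hℱ hM.stronglyAdapted hMnonneg hPbar]
      with ω hω
    have hMω : Mlim ω = (ρ ω)⁻¹ - 1 := (hMlim ω).trans hω.limsup_eq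
    exact ⟨hMω ▸ hω, hMω⟩
  have hlimP : ∀ᵐ ω ∂P, _ := (Measure.AbsolutelyContinuous.rfl.add_right Pbar).ae_le hlim
  have hlimPbar : ∀ᵐ ω ∂Pbar, _ := (Measure.AbsolutelyContinuous.rfl.add_right' P).ae_le hlim
  have hmean : ∫⁻ ω, Mlim ω ∂P = Pbar {ω | Mlim ω < ⊤} := calc
    ∫⁻ ω, Mlim ω ∂P = ∫⁻ ω, (ρ ω)⁻¹ - 1 ∂P := lintegral_congr_ae (hlimP.mono fun _ h => h.2)
    _ = Pbar {ω | ρ ω ≠ 0} := Measure.lintegral_inv_rnDeriv_add_sub_one P Pbar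
    _ = Pbar {ω | Mlim ω < ⊤} := measure_congr <| eventuallyEq_set.2 <|
        hlimPbar.mono fun ω h => by simp [h.2, lt_top_iff_ne_top, ENNReal.sub_eq_top_iff]
  refine ⟨hlimP.mono fun _ h => h.1, hlimPbar.mono fun _ h => h.1, hmean, fun hfin => ?_,
    fun hinf => ?_⟩
  · refine uniformIntegrable_of_forall_setLIntegral_eq hM.stronglyAdapted hMnonneg hPbar ?_
    filter_upwards [hlimPbar, hfin] with ω hω hω_fin
    refine Tendsto.bddAbove_range (a := (Mlim ω).toReal) ?_
    simpa [Function.comp_def, ENNReal.toReal_ofReal (hMnonneg _ ω)] using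
      (ENNReal.tendsto_toReal hω_fin.ne).comp hω.1
  · have hMlim_meas : Measurable Mlim := funext hMlim ▸ .limsup fun n =>
      ENNReal.measurable_ofReal.comp ((hM.stronglyAdapted n).mono (ℱ.le n)).measurable
    refine (lintegral_eq_zero_iff hMlim_meas).1 ?_
    simpa [hmean, lt_top_iff_ne_top] using ae_iff.1 hinf

/-- Durrett's criterion: for a nonnegative martingale `M` with `M 0 = 1` and the tilted
measure `P̄(A) = E(M_n 1_A)` on `F_n`, one has `E(M_∞) = P̄(M_∞ < ∞)`; in particular `M` is
uniformly integrable under `P` if `M_∞ < ∞` `P̄`-a.s., and `M_∞ = 0` `P`-a.s. if `M_∞ = ∞`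
`P̄`-a.s. Here `M_∞` is the limit of `M_n`, existing a.s. under `P` and (in `[0,∞]`)
under `P̄`. -/
theorem stmt_18 {Ω : Type*} {m0 : MeasurableSpace Ω}
    (P : Measure Ω) [IsProbabilityMeasure P]
    (ℱ : Filtration ℕ m0) (hℱ : m0 = ⨆ n, ℱ n)
    (M : ℕ → Ω → ℝ) (hM : Martingale M ℱ P)
    (hMnonneg : ∀ n ω, 0 ≤ M n ω) (hM0 : ∀ ω, M 0 ω = 1)
    (Pbar : Measure Ω) [IsProbabilityMeasure Pbar]
    (hPbar : ∀ n, ∀ s : Set Ω, MeasurableSet[ℱ n] s →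
      Pbar s = ∫⁻ ω in s, ENNReal.ofReal (M n ω) ∂P)
    (Mlim : Ω → ENNReal)
    (hMlim : ∀ ω, Mlim ω = Filter.limsup (fun n => ENNReal.ofReal (M n ω)) atTop) :
    (∀ᵐ ω ∂P, Tendsto (fun n => ENNReal.ofReal (M n ω)) atTop (nhds (Mlim ω))) ∧
    (∀ᵐ ω ∂Pbar, Tendsto (fun n => ENNReal.ofReal (M n ω)) atTop (nhds (Mlim ω))) ∧
    (∫⁻ ω, Mlim ω ∂P = Pbar {ω | Mlim ω < ⊤}) ∧
    ((∀ᵐ ω ∂Pbar, Mlim ω < ⊤) → UniformIntegrable M 1 P) ∧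
    ((∀ᵐ ω ∂Pbar, Mlim ω = ⊤) → ∀ᵐ ω ∂P, Mlim ω = 0) :=
  stmt_18_general P ℱ hℱ M hM hMnonneg Pbar hPbar Mlim hMlim
end
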